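/- arXiv:1101.4178 — 4 statements merged into one kernel-verified Lean document; each statement's English description precedes it below -/
import Mathlib

section
/- Let Λ ⊆ X be a cone in a normed space and w ∈ Λ. Then every Fréchet normal to Λ at w is a Fréchet normal to Λ at tw for every t > 0; consequently the Fréchet normal cone to Λ at w is contained in the (Mordukhovich) limiting normal cone to Λ at the origin. -/
open Filter Topology

variable {X : Type*} [NormedAddCommGroup X] [NormedSpace ℝ X]

/-- `Λ` is a cone: closed under multiplication by nonnegative scalars. -/
def IsConeSet (Λ : Set X) : Prop := ∀ t : ℝ, 0 ≤ t → ∀ v ∈ Λ, t • v ∈ Λ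

/-- `f` is a Fréchet `ε`-normal to `Ω` at `x₀`. -/
def IsEpsNormal (ε : ℝ) (f : X →L[ℝ] ℝ) (Ω : Set X) (x₀ : X) : Prop :=
  ∀ η > 0, ∃ δ > 0, ∀ x ∈ Ω, ‖x - x₀‖ < δ → f (x - x₀) ≤ (ε + η) * ‖x - x₀‖

/-- `f` is a Fréchet normal to `Ω` at `x₀`. -/
def IsFrechetNormal (f : X →L[ℝ] ℝ) (Ω : Set X) (x₀ : X) : Prop :=
  IsEpsNormal 0 f Ω x₀

/-- `f` is a Mordukhovich limiting normal to `Ω` at `x₀`: a weak* limit of Fréchet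
`ε_k`-normals at points `x_k → x₀` of `Ω` with `ε_k ↓ 0`. -/
def IsLimitingNormal (f : X →L[ℝ] ℝ) (Ω : Set X) (x₀ : X) : Prop :=
  ∃ (ε : ℕ → ℝ) (x : ℕ → X) (g : ℕ → X →L[ℝ] ℝ),
    (∀ k, 0 ≤ ε k) ∧ Tendsto ε atTop (𝓝 0) ∧
    (∀ k, x k ∈ Ω) ∧ Tendsto x atTop (𝓝 x₀) ∧
    (∀ v : X, Tendsto (fun k => g k v) atTop (𝓝 (f v))) ∧
    (∀ k, IsEpsNormal (ε k) (g k) Ω (x k))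

/-- for a cone `Λ` and `w ∈ Λ`, every Fréchet normal to `Λ` at `w` is a
Fréchet normal at `t • w` for all `t > 0`, and consequently it is a limiting normal
to `Λ` at the origin. -/
theorem frechetNormal_cone_scaling_and_limiting (Λ : Set X) (hΛ : IsConeSet Λ)
    (w : X) (hw : w ∈ Λ) (f : X →L[ℝ] ℝ) (hf : IsFrechetNormal f Λ w) :
    (∀ t : ℝ, 0 < t → IsFrechetNormal f Λ (t • w)) ∧ IsLimitingNormal f Λ 0 := by
  have main : ∀ t : ℝ, 0 < t → IsFrechetNormal f Λ (t • w) := by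
    intro t ht η hη
    obtain ⟨δ, hδ, h⟩ := hf η hη
    refine ⟨t * δ, by positivity, fun x hx hxd => ?_⟩
    set y := t⁻¹ • x with hy
    have hyΛ : y ∈ Λ := hΛ t⁻¹ (by positivity) x hx
    have key : y - w = t⁻¹ • (x - t • w) := by
      rw [smul_sub, hy, smul_smul, inv_mul_cancel₀ ht.ne', one_smul]
    have hnorm : ‖y - w‖ = t⁻¹ * ‖x - t • w‖ := by
      rw [key, norm_smul, Real.norm_eq_abs, abs_of_pos (by positivity)]
    have hyd : ‖y - w‖ < δ := by
      rw [hnorm, inv_mul_lt_iff₀ ht]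
      exact hxd
    have := h y hyΛ hyd
    have hfval : f (y - w) = t⁻¹ * f (x - t • w) := by
      rw [key, map_smul, smul_eq_mul]
    rw [hfval, hnorm] at this
    have ht' : (0:ℝ) < t⁻¹ := by positivity
    calc f (x - t • w) = t * (t⁻¹ * f (x - t • w)) := by
          field_simp
      _ ≤ t * ((0 + η) * (t⁻¹ * ‖x - t • w‖)) := by
          apply mul_le_mul_of_nonneg_left _ ht.le
          exact this
      _ = (0 + η) * ‖x - t • w‖ := by field_simp
  refine ⟨main, ?_⟩
  refine ⟨fun _ => 0, fun k => ((k:ℝ)+1)⁻¹ • w, fun _ => f, fun _ => le_refl 0,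
    tendsto_const_nhds, fun k => hΛ _ (by positivity) w hw, ?_, fun v => tendsto_const_nhds,
    fun k => main _ (by positivity)⟩
  have : Tendsto (fun k : ℕ => ((k:ℝ)+1)⁻¹) atTop (𝓝 0) := tendsto_one_div_add_atTop_nhds_zero_nat.congr (by simp [one_div])
  simpa using this.smul_const w
end

section
/- For the countable system of convex cones in ℝ² given by Λ₁ := ℝ × ℝ₊ and Λ_i := {(x,y) : y ≤ x/i} for i ≥ 2, the system is extremal at the origin (for any ν > 0, (Λ₁ + (0,ν)) ∩ ⋂_{i≥2} Λ_i = ∅), the intersection ⋂_{i=1}^∞ Λ_i equals ℝ₊ × {0}, and the conic extremality conditions fail: any choice of x*_i ∈ N(0;Λ_i) with Σ 2^{-i} x*_i = 0 forces x*_i = 0 for all i. -/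
open Filter Topology

/-- The normal cone at the origin to a convex cone `Λ ⊆ ℝ²` (the polar cone). -/
def polarNormalCone (Λ : Set (ℝ × ℝ)) : Set (ℝ × ℝ) :=
  {v | ∀ u ∈ Λ, v.1 * u.1 + v.2 * u.2 ≤ 0}

/-- The system of convex cones of Example 4.3: `Λ₁ = ℝ × ℝ₊` and
`Λ_i = {(x,y) : y ≤ x/i}` for `i ≥ 2` (here `S k` is `Λ_{k+1}`). -/
noncomputable def exampleCones : ℕ → Set (ℝ × ℝ) := fun i =>
  match i with
  | 0 => {p : ℝ × ℝ | 0 ≤ p.2}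
  | Nat.succ k => {p : ℝ × ℝ | p.2 ≤ p.1 / (k + 2)}

/-!
The cones `Λ_i`, `i ≥ 2`, squeeze down onto the ray `ℝ₊ × {0}`, so every point of their
intersection has `y ≤ 0` and misses the upward translate of `Λ₁`. Each `Λ_i` is a half-plane
`{u | ⟨a_i, u⟩ ≤ 0}`, whose polar cone is the ray `ℝ₊ a_i`, with `a_1 = (0, -1)` and
`a_i = (-1, i)`. The first coordinates of the normals are therefore all `≤ 0`, so a vanishing
weighted sum forces them to vanish; this kills every normal with `i ≥ 2`, and then the sum
reduces to its single term `x*_1 / 2`.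
-/

lemma nonpos_of_forall_le_div_nat_add_two {x y : ℝ} (h : ∀ n : ℕ, y ≤ x / (n + 2)) :
    y ≤ 0 := by
  have hlim : Tendsto (fun n : ℕ => x / ((n + 2 : ℕ) : ℝ)) atTop (𝓝 0) :=
    (tendsto_const_div_atTop_nhds_zero_nat x).comp (tendsto_add_atTop_nat 2)
  exact ge_of_tendsto' hlim fun n => by exact_mod_cast h n

lemma snd_nonpos_of_mem_iInter_exampleCones_succ {p : ℝ × ℝ}
    (hp : p ∈ ⋂ i : ℕ, exampleCones (i + 1)) : p.2 ≤ 0 :=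
  nonpos_of_forall_le_div_nat_add_two (Set.mem_iInter.mp hp)

theorem exampleCones_extremal (ν : ℝ) (hν : 0 < ν) :
    ((fun p : ℝ × ℝ => p + ((0 : ℝ), ν)) '' exampleCones 0) ∩
      (⋂ i : ℕ, exampleCones (i + 1)) = ∅ := by
  refine Set.eq_empty_of_forall_notMem ?_
  rintro _ ⟨⟨q, hq, rfl⟩, hmem⟩
  have hq : 0 ≤ q.2 := hq
  have hsnd := snd_nonpos_of_mem_iInter_exampleCones_succ hmem
  simp only [Prod.snd_add] at hsnd
  linarith

theorem iInter_exampleCones :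
    (⋂ i : ℕ, exampleCones i) = {p : ℝ × ℝ | 0 ≤ p.1 ∧ p.2 = 0} := by
  rw [← Set.inter_iInter_nat_succ]
  ext p
  constructor
  · rintro ⟨h0, hsucc⟩
    have h0 : 0 ≤ p.2 := h0
    have hsnd : p.2 = 0 := le_antisymm (snd_nonpos_of_mem_iInter_exampleCones_succ hsucc) h0
    have h1 : p.2 ≤ p.1 / 2 := by simpa [exampleCones] using Set.mem_iInter.mp hsucc 0
    refine ⟨?_, hsnd⟩
    linarith
  · rintro ⟨hfst, hsnd⟩
    refine ⟨hsnd.ge, Set.mem_iInter.mpr fun k => ?_⟩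
    show p.2 ≤ p.1 / (k + 2)
    rw [hsnd]
    positivity

def halfPlane (a : ℝ × ℝ) : Set (ℝ × ℝ) := {u | a.1 * u.1 + a.2 * u.2 ≤ 0}

theorem polarNormalCone_halfPlane (a : ℝ × ℝ) :
    polarNormalCone (halfPlane a) = {v | ∃ t : ℝ, 0 ≤ t ∧ v = t • a} := by
  ext v
  constructor
  · intro hv
    -- `t • a` is the orthogonal projection of `v` onto `ℝ a`; testing `v` against the residual
    -- `v - t • a`, which lies on the boundary line, shows that the residual vanishes.
    set t := (v.1 * a.1 + v.2 * a.2) / (a.1 ^ 2 + a.2 ^ 2)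
    have hperp : a.1 * (v.1 - t * a.1) + a.2 * (v.2 - t * a.2) = 0 := by
      rcases eq_or_ne (a.1 ^ 2 + a.2 ^ 2) 0 with hd | hd
      · -- `t` is the junk value `0` here, harmlessly, since then `a = 0`.
        have h1 : a.1 = 0 := by nlinarith
        have h2 : a.2 = 0 := by nlinarith
        simp [h1, h2]
      · simp only [t]
        field_simp
        ring
    have hdist : (v.1 - t * a.1) ^ 2 + (v.2 - t * a.2) ^ 2 ≤ 0 := by
      have hvu : v.1 * (v.1 - t * a.1) + v.2 * (v.2 - t * a.2) ≤ 0 :=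
        hv (v.1 - t * a.1, v.2 - t * a.2) hperp.le
      linear_combination hvu - t * hperp
    have ht : 0 ≤ t := by
      have hva : v.1 * -a.1 + v.2 * -a.2 ≤ 0 :=
        hv (-a.1, -a.2) (by
          show a.1 * -a.1 + a.2 * -a.2 ≤ 0
          nlinarith [sq_nonneg a.1, sq_nonneg a.2])
      exact div_nonneg (by linarith) (by positivity)
    refine ⟨t, ht, Prod.ext ?_ ?_⟩ <;> simp only [Prod.smul_fst, Prod.smul_snd, smul_eq_mul] <;>
      nlinarith [sq_nonneg (v.1 - t * a.1), sq_nonneg (v.2 - t * a.2)]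
  · rintro ⟨t, ht, rfl⟩ u hu
    have hu : a.1 * u.1 + a.2 * u.2 ≤ 0 := hu
    simp only [Prod.smul_fst, Prod.smul_snd, smul_eq_mul]
    nlinarith

def exampleNormals : ℕ → ℝ × ℝ
  | 0 => (0, -1)
  | k + 1 => (-1, k + 2)

lemma exampleCones_eq_halfPlane (i : ℕ) : exampleCones i = halfPlane (exampleNormals i) := by
  ext p
  cases i with
  | zero =>
    show 0 ≤ p.2 ↔ 0 * p.1 + -1 * p.2 ≤ 0
    constructor <;> intro h <;> linarith
  | succ k =>
    show p.2 ≤ p.1 / (k + 2) ↔ -1 * p.1 + (k + 2) * p.2 ≤ 0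
    rw [le_div_iff₀ (by positivity)]
    constructor <;> intro h <;> linarith

theorem eq_zero_of_mem_polarNormalCone_exampleCones_of_hasSum (x : ℕ → ℝ × ℝ)
    (hx : ∀ i, x i ∈ polarNormalCone (exampleCones i))
    (hsum : HasSum (fun i => (1 / 2 ^ (i + 1) : ℝ) • x i) 0) (i : ℕ) : x i = 0 := by
  have hray : ∀ i, ∃ t : ℝ, 0 ≤ t ∧ x i = t • exampleNormals i := fun i => by
    simpa only [exampleCones_eq_halfPlane, polarNormalCone_halfPlane, Set.mem_ofPred_eq] using hx i
  choose t ht hxt using hray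
  have hc : ∀ i : ℕ, (0 : ℝ) < 1 / 2 ^ (i + 1) := fun i => by positivity
  have hfst_nonneg : ∀ i, 0 ≤ -((1 / 2 ^ (i + 1) : ℝ) • x i).1 := by
    intro i
    cases i with
    | zero => simp [hxt, exampleNormals]
    | succ k =>
      simp only [hxt, exampleNormals, Prod.smul_fst, smul_eq_mul]
      nlinarith [hc (k + 1), ht (k + 1)]
  have hfst : HasSum (fun i => -((1 / 2 ^ (i + 1) : ℝ) • x i).1) 0 := by
    simpa using (hsum.map (AddMonoidHom.fst ℝ ℝ) continuous_fst).neg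
  have hfst_zero := (hasSum_zero_iff_of_nonneg hfst_nonneg).mp hfst
  have hsucc : ∀ k, x (k + 1) = 0 := by
    intro k
    have ht0 : t (k + 1) = 0 := by simpa [hxt, exampleNormals] using congrFun hfst_zero (k + 1)
    rw [hxt, ht0, zero_smul]
  have h0 : (1 / 2 ^ (0 + 1) : ℝ) • x 0 = 0 :=
    (hasSum_single 0 fun j hj => by
      obtain ⟨k, rfl⟩ := Nat.exists_eq_succ_of_ne_zero hj
      simp [hsucc]).unique hsum
  cases i with
  | zero => exact (smul_eq_zero.mp h0).resolve_left (hc 0).ne'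
  | succ k => exact hsucc k

/-- the system `exampleCones` is extremal at the origin, its intersection
is `ℝ₊ × {0}` (so the nonoverlapping condition fails), and the conic extremality
conditions fail: any normals summing to zero must all vanish. -/
theorem nonoverlapping_condition_essential :
    (∀ ν : ℝ, 0 < ν →
      ((fun p : ℝ × ℝ => p + ((0 : ℝ), ν)) '' exampleCones 0) ∩
        (⋂ i : ℕ, exampleCones (i + 1)) = ∅) ∧
    (⋂ i : ℕ, exampleCones i) = {p : ℝ × ℝ | 0 ≤ p.1 ∧ p.2 = 0} ∧
    (∀ x : ℕ → ℝ × ℝ, (∀ i, x i ∈ polarNormalCone (exampleCones i)) →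
      HasSum (fun i => (1 / 2 ^ (i + 1) : ℝ) • x i) 0 → ∀ i, x i = 0) :=
  ⟨exampleCones_extremal, iInter_exampleCones,
    eq_zero_of_mem_polarNormalCone_exampleCones_of_hasSum⟩
end

section
/- Let Ω be a subset of a reflexive Banach space X, x̄ ∈ Ω, and Λ_w := T_w(x̄;Ω) the weak contingent cone. Then for any d ∈ Λ_w, any x* ∈ N̂(d;Λ_w), any sequences x_k ∈ Ω, t_k ↓ 0 with (x_k − x̄)/t_k → d weakly, and any ε > 0, there exists δ ∈ (0,ε) such that limsup_k sup{ ⟨x*, z − x_k⟩/t_k : z ∈ Ω ∩ (x_k + t_k δ 𝔹) } ≤ 2εδ. -/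
open Filter Topology Metric

variable {X : Type*} [NormedAddCommGroup X] [NormedSpace ℝ X]

/-- The weak contingent cone `T_w(x₀;Ω)`. -/
def weakContingentCone (x₀ : X) (Ω : Set X) : Set X :=
  {v | ∃ (t : ℕ → ℝ) (w : ℕ → X), (∀ k, 0 < t k) ∧ Tendsto t atTop (𝓝 0) ∧
    (∀ f : X →L[ℝ] ℝ, Tendsto (fun k => f (w k)) atTop (𝓝 (f v))) ∧
    ∀ k, x₀ + t k • w k ∈ Ω}

/-- The reflexivity of the normed space `X`: the canonical embedding into the
double dual is surjective. -/
def IsReflexiveSpace (X : Type*) [NormedAddCommGroup X] [NormedSpace ℝ X] : Prop :=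
  Function.Surjective (NormedSpace.inclusionInDoubleDual ℝ X)

/-- `X` is an Asplund space: every separable subspace has a separable dual. -/
def IsAsplundSpace (X : Type*) [NormedAddCommGroup X] [NormedSpace ℝ X] : Prop :=
  ∀ Y : Subspace ℝ X, TopologicalSpace.SeparableSpace Y →
    TopologicalSpace.SeparableSpace (Y →L[ℝ] ℝ)

/-- The tangential approximate normality (TAN) property of `Ω` at `x₀`. -/
def TANProperty (Ω : Set X) (x₀ : X) : Prop :=
  ∀ d ∈ weakContingentCone x₀ Ω, ∀ f : X →L[ℝ] ℝ,
    IsFrechetNormal f (weakContingentCone x₀ Ω) d →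
    ∃ (t : ℕ → ℝ) (x : ℕ → X), (∀ k, 0 < t k) ∧ Tendsto t atTop (𝓝 0) ∧
      (∀ k, x k ∈ Ω) ∧
      (∀ g : X →L[ℝ] ℝ, Tendsto (fun k => g ((t k)⁻¹ • (x k - x₀))) atTop (𝓝 (g d))) ∧
      ∀ ε > 0, ∃ δ : ℝ, 0 < δ ∧ δ < ε ∧
        Filter.limsup (fun k =>
          sSup ((fun z => f (z - x k) / t k) '' (Ω ∩ closedBall (x k) (t k * δ))))
          atTop ≤ 2 * ε * δ

/-! If the difference quotients `f (z - x k) / t k` over `Ω ∩ closedBall (x k) (t k * δ)` exceeded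
`2 ε δ` along a subsequence, pick such points `z k`. The quotients `(z k - x₀) / t k` stay within
`δ` of the weakly convergent, hence bounded (Banach–Steinhaus), sequence `(x k - x₀) / t k`, so by
reflexivity a subsequence converges weakly to some `v`. Then `v` lies in the weak contingent
cone, `‖v - d‖ ≤ δ` by weak lower semicontinuity of the norm, and `f (v - d) ≥ 2 ε δ` in the
limit, contradicting the Fréchet normality estimate `f (v - d) ≤ ε ‖v - d‖` near `d`.

Weak sequential compactness is obtained on the closed span of the sequence: it is separable and
reflexive, so its dual is separable and sequential Banach–Alaoglu applies in its bidual. -/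

open TopologicalSpace

theorem Submodule.exists_dual_vanishing_of_notMem {Y : Submodule ℝ X}
    (hY : IsClosed (Y : Set X)) {x : X} (hx : x ∉ Y) :
    ∃ g : X →L[ℝ] ℝ, (∀ y ∈ Y, g y = 0) ∧ g x ≠ 0 := by
  obtain ⟨g, u, hgY, hux⟩ := geometric_hahn_banach_closed_point Y.convex hY hx
  have hu : 0 < u := by simpa using hgY 0 Y.zero_mem
  refine ⟨g, fun y hy => ?_, (hu.trans hux).ne'⟩
  by_contra hgy
  -- `g` is bounded above on the subspace `Y`, hence vanishes there
  have := hgY (((u + 1) / g y) • y) (Y.smul_mem _ hy)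
  rw [map_smul, smul_eq_mul, div_mul_cancel₀ _ hgy] at this
  linarith

theorem separableSpace_of_separableSpace_dual [SeparableSpace (X →L[ℝ] ℝ)] :
    SeparableSpace X := by
  set φ := denseSeq (X →L[ℝ] ℝ)
  have hy : ∀ n, ∃ y : X, ‖y‖ ≤ 1 ∧ ‖φ n‖ / 2 ≤ ‖φ n y‖ := by
    intro n
    rcases eq_or_ne (φ n) 0 with h0 | h0
    · exact ⟨0, by simp [h0]⟩
    · obtain ⟨y, hy1, hy2⟩ := (φ n).exists_lt_apply_of_lt_opNorm
        (half_lt_self (norm_pos_iff.2 h0))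
      exact ⟨y, hy1.le, hy2.le⟩
  choose y hy1 hy2 using hy
  have hsep : ∀ g : X →L[ℝ] ℝ, (∀ n, g (y n) = 0) → g = 0 := by
    intro g hg
    by_contra hg0
    obtain ⟨n, hn⟩ := (denseRange_denseSeq _).exists_dist_lt g
      (by positivity : 0 < ‖g‖ / 3)
    rw [dist_eq_norm] at hn
    have hφn : ‖φ n (y n)‖ ≤ ‖g - φ n‖ := by
      calc ‖φ n (y n)‖ = ‖(g - φ n) (y n)‖ := by simp [hg n]
        _ ≤ ‖g - φ n‖ * ‖y n‖ := (g - φ n).le_opNorm _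
        _ ≤ ‖g - φ n‖ := mul_le_of_le_one_right (norm_nonneg _) (hy1 n)
    have := norm_le_norm_add_norm_sub' g (φ n)
    linarith [hy2 n]
  set K := Submodule.span ℝ (Set.range y)
  have hK : ∀ e, e ∈ K.topologicalClosure := by
    intro e
    by_contra he
    obtain ⟨g, hgK, hge⟩ :=
      Submodule.exists_dual_vanishing_of_notMem K.isClosed_topologicalClosure he
    exact hge (by rw [hsep g fun n => hgK _ (K.le_topologicalClosure
      (Submodule.subset_span ⟨n, rfl⟩))]; rfl)
  refine isSeparable_univ_iff.1 (IsSeparable.mono ?_ fun e _ => hK e)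
  rw [Submodule.topologicalClosure_coe]
  exact (Set.countable_range y).isSeparable.span.closure

theorem IsReflexiveSpace.submodule (h : IsReflexiveSpace X) {Y : Submodule ℝ X}
    (hY : IsClosed (Y : Set X)) : IsReflexiveSpace Y := by
  intro ψ
  let restrict : (X →L[ℝ] ℝ) →L[ℝ] (Y →L[ℝ] ℝ) :=
    (ContinuousLinearMap.compL ℝ Y X ℝ).flip Y.subtypeL
  obtain ⟨x, hx⟩ := h (ψ.comp restrict)
  have hψ : ∀ g : X →L[ℝ] ℝ, g x = ψ (g.comp Y.subtypeL) := fun g =>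
    congr($hx g)
  have hxY : x ∈ Y := by
    by_contra hxY
    obtain ⟨g, hgY, hgx⟩ := Submodule.exists_dual_vanishing_of_notMem hY hxY
    have hg0 : g.comp Y.subtypeL = 0 := by ext z; exact hgY z z.2
    exact hgx (by rw [hψ, hg0, map_zero])
  refine ⟨⟨x, hxY⟩, ContinuousLinearMap.ext fun g => ?_⟩
  obtain ⟨g', hg', -⟩ := exists_extension_norm_eq Y g
  have hrestrict : g'.comp Y.subtypeL = g := ContinuousLinearMap.ext hg'
  rw [← hrestrict, ← hψ]
  rfl

theorem IsReflexiveSpace.separableSpace_dual [SeparableSpace X] (h : IsReflexiveSpace X) :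
    SeparableSpace (X →L[ℝ] ℝ) :=
  have : SeparableSpace ((X →L[ℝ] ℝ) →L[ℝ] ℝ) :=
    h.denseRange.separableSpace (NormedSpace.inclusionInDoubleDual ℝ X).continuous
  separableSpace_of_separableSpace_dual

def WeaklyTendsto (u : ℕ → X) (v : X) : Prop :=
  ∀ g : X →L[ℝ] ℝ, Tendsto (fun k => g (u k)) atTop (𝓝 (g v))

theorem WeaklyTendsto.comp {u : ℕ → X} {v : X} (h : WeaklyTendsto u v) {φ : ℕ → ℕ}
    (hφ : Tendsto φ atTop atTop) : WeaklyTendsto (u ∘ φ) v :=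
  fun g => (h g).comp hφ

theorem WeaklyTendsto.sub {u w : ℕ → X} {v y : X} (hu : WeaklyTendsto u v)
    (hw : WeaklyTendsto w y) : WeaklyTendsto (u - w) (v - y) :=
  fun g => by simpa using (hu g).sub (hw g)

theorem WeaklyTendsto.exists_norm_le {u : ℕ → X} {v : X} (h : WeaklyTendsto u v) :
    ∃ C, ∀ k, ‖u k‖ ≤ C := by
  obtain ⟨C, hC⟩ := banach_steinhaus (g := fun k => NormedSpace.inclusionInDoubleDual ℝ X (u k))
    fun g => by
      obtain ⟨C, hC⟩ := (h g).norm.bddAbove_range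
      exact ⟨C, fun k => hC ⟨k, rfl⟩⟩
  exact ⟨C, fun k => (NormedSpace.inclusionInDoubleDualLi (E := X) ℝ).norm_map (u k) ▸ hC k⟩

theorem WeaklyTendsto.norm_le {u : ℕ → X} {v : X} {r : ℝ} (h : WeaklyTendsto u v)
    (hu : ∀ k, ‖u k‖ ≤ r) : ‖v‖ ≤ r := by
  obtain ⟨g, hg1, hgv⟩ := exists_dual_vector'' ℝ v
  rw [← show g v = ‖v‖ by simpa using hgv]
  refine le_of_tendsto (h g) (Eventually.of_forall fun k => ?_)
  calc g (u k) ≤ ‖g (u k)‖ := Real.le_norm_self _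
    _ ≤ ‖g‖ * ‖u k‖ := g.le_opNorm _
    _ ≤ ‖u k‖ := mul_le_of_le_one_left (norm_nonneg _) hg1
    _ ≤ r := hu k

theorem IsReflexiveSpace.exists_subseq_weaklyTendsto_of_separableSpace [SeparableSpace X]
    (h : IsReflexiveSpace X) {u : ℕ → X} {M : ℝ} (hu : ∀ k, ‖u k‖ ≤ M) :
    ∃ φ : ℕ → ℕ, StrictMono φ ∧ ∃ v, WeaklyTendsto (u ∘ φ) v := by
  have := h.separableSpace_dual
  let U : ℕ → WeakDual ℝ (X →L[ℝ] ℝ) :=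
    fun k => StrongDual.toWeakDual (NormedSpace.inclusionInDoubleDual ℝ X (u k))
  have hU : ∀ k, U k ∈ WeakDual.toStrongDual ⁻¹' closedBall 0 M := fun k =>
    (mem_closedBall_zero_iff (E := (X →L[ℝ] ℝ) →L[ℝ] ℝ)).2
      ((NormedSpace.double_dual_bound ℝ X (u k)).trans (hu k))
  obtain ⟨Ψ, -, φ, hφ, hlim⟩ := WeakDual.isSeqCompact_closedBall ℝ (X →L[ℝ] ℝ) 0 M hU
  obtain ⟨v, hv⟩ := h (WeakDual.toStrongDual Ψ)
  refine ⟨φ, hφ, v, fun g => ?_⟩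
  have := ((WeakDual.eval_continuous g).tendsto Ψ).comp hlim
  exact congr($hv g) ▸ this

theorem IsReflexiveSpace.exists_subseq_weaklyTendsto (h : IsReflexiveSpace X) {u : ℕ → X}
    {M : ℝ} (hu : ∀ k, ‖u k‖ ≤ M) :
    ∃ φ : ℕ → ℕ, StrictMono φ ∧ ∃ v, WeaklyTendsto (u ∘ φ) v := by
  set K := Submodule.span ℝ (Set.range u)
  have huK : ∀ k, u k ∈ K.topologicalClosure := fun k =>
    K.le_topologicalClosure (Submodule.subset_span ⟨k, rfl⟩)
  have : SeparableSpace K.topologicalClosure := by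
    apply IsSeparable.separableSpace
    rw [Submodule.topologicalClosure_coe]
    exact (Set.countable_range u).isSeparable.span.closure
  obtain ⟨φ, hφ, v, hv⟩ := (h.submodule K.isClosed_topologicalClosure
    ).exists_subseq_weaklyTendsto_of_separableSpace (u := fun k => ⟨u k, huK k⟩) hu
  exact ⟨φ, hφ, v, fun g => hv (g.comp (Submodule.subtypeL _))⟩

section DifferenceQuotients

variable (f : X →L[ℝ] ℝ) (Ω : Set X) {y : X} {s r : ℝ}

theorem bddAbove_image_apply_sub_div (hs : 0 < s) :
    BddAbove ((fun z => f (z - y) / s) '' (Ω ∩ closedBall y (s * r))) := by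
  refine ⟨‖f‖ * r, ?_⟩
  rintro _ ⟨z, ⟨-, hz⟩, rfl⟩
  rw [mem_closedBall, dist_eq_norm] at hz
  rw [div_le_iff₀ hs]
  calc f (z - y) ≤ ‖f‖ * ‖z - y‖ := (le_abs_self _).trans (f.le_opNorm _)
    _ ≤ ‖f‖ * (s * r) := by gcongr
    _ = ‖f‖ * r * s := by ring

theorem zero_mem_image_apply_sub_div (hy : y ∈ Ω) (hsr : 0 ≤ s * r) :
    (0 : ℝ) ∈ (fun z => f (z - y) / s) '' (Ω ∩ closedBall y (s * r)) :=
  ⟨y, ⟨hy, mem_closedBall_self hsr⟩, by simp⟩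

end DifferenceQuotients

theorem IsReflexiveSpace.le_mul_of_forall_le_apply_sub_div (hrefl : IsReflexiveSpace X)
    {Ω : Set X} {x₀ d : X} {f : X →L[ℝ] ℝ} {ε δ δ' c : ℝ}
    (hloc : ∀ v ∈ weakContingentCone x₀ Ω, ‖v - d‖ < δ' → f (v - d) ≤ ε * ‖v - d‖)
    (hε : 0 ≤ ε) (hδ : δ < δ') {t : ℕ → ℝ} {x z : ℕ → X} (ht : ∀ k, 0 < t k)
    (ht0 : Tendsto t atTop (𝓝 0)) (hx : WeaklyTendsto (fun k => (t k)⁻¹ • (x k - x₀)) d)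
    (hzΩ : ∀ k, z k ∈ Ω) (hz : ∀ k, ‖z k - x k‖ ≤ t k * δ)
    (hc : ∀ k, c ≤ f (z k - x k) / t k) : c ≤ ε * δ := by
  set q : ℕ → X := fun k => (t k)⁻¹ • (x k - x₀)
  set w : ℕ → X := fun k => (t k)⁻¹ • (z k - x₀)
  have hwq : ∀ k, (w - q) k = (t k)⁻¹ • (z k - x k) := fun k => by
    simp only [Pi.sub_apply, w, q, ← smul_sub, sub_sub_sub_cancel_right]
  have hwq_norm : ∀ k, ‖(w - q) k‖ ≤ δ := fun k => by
    rw [hwq, norm_smul, norm_inv, Real.norm_of_nonneg (ht k).le, inv_mul_le_iff₀ (ht k)]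
    exact hz k
  obtain ⟨C, hC⟩ := hx.exists_norm_le
  obtain ⟨φ, hφ, v, hv⟩ := hrefl.exists_subseq_weaklyTendsto (u := w) (M := C + δ) fun k =>
    (norm_le_norm_add_norm_sub' (w k) (q k)).trans (add_le_add (hC k) (hwq_norm k))
  have hvd := hv.sub (hx.comp hφ.tendsto_atTop)
  have hv_cone : v ∈ weakContingentCone x₀ Ω := by
    refine ⟨t ∘ φ, w ∘ φ, fun k => ht _, ht0.comp hφ.tendsto_atTop, hv, fun k => ?_⟩
    simpa [w, smul_smul, (ht (φ k)).ne'] using hzΩ (φ k)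
  have hvd_norm : ‖v - d‖ ≤ δ := hvd.norm_le fun k => hwq_norm (φ k)
  have hc_le : c ≤ f (v - d) := ge_of_tendsto (hvd f) (Eventually.of_forall fun k => by
    change c ≤ f ((w - q) (φ k))
    rw [hwq, map_smul, smul_eq_mul, ← div_eq_inv_mul]
    exact hc (φ k))
  calc c ≤ f (v - d) := hc_le
    _ ≤ ε * ‖v - d‖ := hloc v hv_cone (hvd_norm.trans_lt hδ)
    _ ≤ ε * δ := by gcongr

theorem tangential_approximate_normality_reflexive_general
    (hrefl : IsReflexiveSpace X) (Ω : Set X) (x₀ : X)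
    (d : X) (f : X →L[ℝ] ℝ)
    (hf : IsFrechetNormal f (weakContingentCone x₀ Ω) d)
    (t : ℕ → ℝ) (x : ℕ → X) (ht : ∀ k, 0 < t k) (ht0 : Tendsto t atTop (𝓝 0))
    (hxΩ : ∀ k, x k ∈ Ω)
    (hweak : ∀ g : X →L[ℝ] ℝ, Tendsto (fun k => g ((t k)⁻¹ • (x k - x₀))) atTop (𝓝 (g d)))
    (ε : ℝ) (hε : 0 < ε) :
    ∃ δ : ℝ, 0 < δ ∧ δ < ε ∧
      Filter.limsup (fun k =>
        sSup ((fun z => f (z - x k) / t k) '' (Ω ∩ closedBall (x k) (t k * δ))))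
        atTop ≤ 2 * ε * δ := by
  obtain ⟨δ', hδ', hloc⟩ := hf ε hε
  set δ := min (ε / 2) (δ' / 2)
  have hδ : 0 < δ := lt_min (half_pos hε) (half_pos hδ')
  refine ⟨δ, hδ, (min_le_left _ _).trans_lt (half_lt_self hε), ?_⟩
  have hbdd k := bddAbove_image_apply_sub_div f Ω (y := x k) (r := δ) (ht k)
  have hzero k := zero_mem_image_apply_sub_div f Ω (hxΩ k) (mul_pos (ht k) hδ).le
  refine limsup_le_of_le (isCoboundedUnder_le_of_le atTop fun k =>
    le_csSup (hbdd k) (hzero k)) ?_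
  by_contra hfreq
  obtain ⟨φ, hφ, hlt⟩ := extraction_of_frequently_atTop (not_eventually.1 hfreq)
  have hexists j :=
    Set.exists_mem_image.1 (exists_lt_of_lt_csSup ⟨0, hzero (φ j)⟩ (not_le.1 (hlt j)))
  choose z hzmem hzlt using hexists
  have := hrefl.le_mul_of_forall_le_apply_sub_div (hloc := fun v hv hvd => by
      simpa using hloc v hv hvd) hε.le ((min_le_right _ _).trans_lt (half_lt_self hδ'))
    (fun j => ht (φ j)) (ht0.comp hφ.tendsto_atTop) (fun g => (hweak g).comp hφ.tendsto_atTop)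
    (fun j => (hzmem j).1) (fun j => by simpa [dist_eq_norm] using (hzmem j).2)
    (fun j => (hzlt j).le)
  linarith [mul_pos hε hδ]

/-- in a reflexive Banach space, the TAN estimate holds for every
weak contingent direction, every Fréchet normal to the weak contingent cone, and
every defining sequence. -/
theorem tangential_approximate_normality_reflexive
    [CompleteSpace X] (hrefl : IsReflexiveSpace X) (Ω : Set X) (x₀ : X) (hx₀ : x₀ ∈ Ω)
    (d : X) (hd : d ∈ weakContingentCone x₀ Ω) (f : X →L[ℝ] ℝ)
    (hf : IsFrechetNormal f (weakContingentCone x₀ Ω) d)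
    (t : ℕ → ℝ) (x : ℕ → X) (ht : ∀ k, 0 < t k) (ht0 : Tendsto t atTop (𝓝 0))
    (hxΩ : ∀ k, x k ∈ Ω)
    (hweak : ∀ g : X →L[ℝ] ℝ, Tendsto (fun k => g ((t k)⁻¹ • (x k - x₀))) atTop (𝓝 (g d)))
    (ε : ℝ) (hε : 0 < ε) :
    ∃ δ : ℝ, 0 < δ ∧ δ < ε ∧
      Filter.limsup (fun k =>
        sSup ((fun z => f (z - x k) / t k) '' (Ω ∩ closedBall (x k) (t k * δ))))
        atTop ≤ 2 * ε * δ :=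
  tangential_approximate_normality_reflexive_general hrefl Ω x₀ d f hf t x ht ht0 hxΩ hweak ε hε
end

section
/- Let Ω₁ := {(x₁,x₂) ∈ ℝ² : x₂ ≥ −x₁²} and Ω₂ := ℝ × ℝ₋, with x̄ = (0,0). Then T(x̄;Ω₁) = ℝ × ℝ₊ and T(x̄;Ω₂) = ℝ × ℝ₋, the pair {T(x̄;Ω₁), T(x̄;Ω₂)} is extremal at the origin (so {Ω₁,Ω₂,x̄} is a contingent extremal system), but x̄ is not a local extremal point of {Ω₁,Ω₂} in the conventional sense. -/
open Filter Topology

/-- The Bouligand–Severi contingent cone `T(x₀;Ω)`. -/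
def contingentCone {E : Type*} [NormedAddCommGroup E] [NormedSpace ℝ E]
    (x₀ : E) (Ω : Set E) : Set E :=
  {v | ∃ (t : ℕ → ℝ) (w : ℕ → E), (∀ k, 0 < t k) ∧ Tendsto t atTop (𝓝 0) ∧
    Tendsto w atTop (𝓝 v) ∧ ∀ k, x₀ + t k • w k ∈ Ω}

/-- The translate `S - a = {x | x + a ∈ S}`. -/
def Set.translate {E : Type*} (S : Set E) [Add E] (a : E) : Set E := {x | x + a ∈ S}

/-- for `Ω₁ = {(x₁,x₂) : x₂ ≥ -x₁²}`, `Ω₂ = ℝ × ℝ₋` and `x̄ = (0,0)`,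
the contingent cones are `ℝ × ℝ₊` and `ℝ × ℝ₋`, the pair of contingent cones is
extremal at the origin, but `x̄` is not a local extremal point of `{Ω₁, Ω₂}` in the
conventional sense. -/
theorem contingent_extremality_not_local_extremality :
    let Ω₁ : Set (ℝ × ℝ) := {p | -p.1 ^ 2 ≤ p.2}
    let Ω₂ : Set (ℝ × ℝ) := {p | p.2 ≤ 0}
    contingentCone (0 : ℝ × ℝ) Ω₁ = {p : ℝ × ℝ | 0 ≤ p.2} ∧
    contingentCone (0 : ℝ × ℝ) Ω₂ = {p : ℝ × ℝ | p.2 ≤ 0} ∧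
    (∃ a₁ a₂ : ℝ × ℝ,
      (contingentCone (0 : ℝ × ℝ) Ω₁).translate a₁ ∩
        (contingentCone (0 : ℝ × ℝ) Ω₂).translate a₂ = ∅) ∧
    ¬(∃ a₁ a₂ : ℕ → ℝ × ℝ, Tendsto a₁ atTop (𝓝 0) ∧ Tendsto a₂ atTop (𝓝 0) ∧
      ∃ U ∈ 𝓝 (0 : ℝ × ℝ), ∀ᶠ k in atTop,
        Ω₁.translate (a₁ k) ∩ Ω₂.translate (a₂ k) ∩ U = ∅) := by
  intro Ω₁ Ω₂
  have tpos : ∀ k : ℕ, (0:ℝ) < 1 / (k + 1) := fun k => by positivity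
  have tlim : Tendsto (fun k : ℕ => 1 / ((k:ℝ) + 1)) atTop (𝓝 0) :=
    tendsto_one_div_add_atTop_nhds_zero_nat
  have hcone1 : contingentCone (0 : ℝ × ℝ) Ω₁ = {p : ℝ × ℝ | 0 ≤ p.2} := by
    ext v
    constructor
    · rintro ⟨t, w, ht, ht0, hw, hmem⟩
      have key : ∀ k, -(t k) * (w k).1 ^ 2 ≤ (w k).2 := by
        intro k
        have h := hmem k
        simp only [Ω₁, Set.mem_setOf_eq, zero_add, Prod.smul_fst, Prod.smul_snd,
          smul_eq_mul] at h
        nlinarith [ht k, sq_nonneg ((w k).1)]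
      have hw1 : Tendsto (fun k => (w k).1) atTop (𝓝 v.1) :=
        (continuous_fst.tendsto v).comp hw
      have hw2 : Tendsto (fun k => (w k).2) atTop (𝓝 v.2) :=
        (continuous_snd.tendsto v).comp hw
      have h1 : Tendsto (fun k => -(t k) * (w k).1 ^ 2) atTop (𝓝 (-(0:ℝ) * v.1 ^ 2)) :=
        ht0.neg.mul (hw1.pow 2)
      have h0 : (0:ℝ) ≤ v.2 := by
        have := le_of_tendsto_of_tendsto' h1 hw2 key
        simpa using this
      exact h0
    · intro hv
      refine ⟨fun k => 1 / (k + 1), fun _ => v, tpos, tlim, tendsto_const_nhds, fun k => ?_⟩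
      simp only [Ω₁, Set.mem_setOf_eq, zero_add, Prod.smul_fst, Prod.smul_snd, smul_eq_mul]
      have hv' : (0:ℝ) ≤ v.2 := hv
      nlinarith [tpos k, mul_nonneg (tpos k).le hv', sq_nonneg ((1 / ((k:ℝ) + 1)) * v.1)]
  have hcone2 : contingentCone (0 : ℝ × ℝ) Ω₂ = {p : ℝ × ℝ | p.2 ≤ 0} := by
    ext v
    constructor
    · rintro ⟨t, w, ht, ht0, hw, hmem⟩
      have key : ∀ k, (w k).2 ≤ 0 := by
        intro k
        have h := hmem k
        simp only [Ω₂, Set.mem_setOf_eq, zero_add, Prod.smul_snd, smul_eq_mul] at h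
        nlinarith [ht k]
      have hw2 : Tendsto (fun k => (w k).2) atTop (𝓝 v.2) :=
        (continuous_snd.tendsto v).comp hw
      exact le_of_tendsto' hw2 key
    · intro hv
      refine ⟨fun k => 1 / (k + 1), fun _ => v, tpos, tlim, tendsto_const_nhds, fun k => ?_⟩
      simp only [Ω₂, Set.mem_setOf_eq, zero_add, Prod.smul_snd, smul_eq_mul]
      have hv' : v.2 ≤ (0:ℝ) := hv
      exact mul_nonpos_of_nonneg_of_nonpos (tpos k).le hv'
  refine ⟨hcone1, hcone2, ?_, ?_⟩
  · refine ⟨(0, -1), (0, 0), ?_⟩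
    rw [hcone1, hcone2]
    ext x
    simp only [Set.translate, Set.mem_inter_iff, Set.mem_setOf_eq, Set.mem_empty_iff_false,
      iff_false, not_and, Prod.snd_add]
    intro h1
    simp at h1 ⊢
    linarith
  · rintro ⟨a₁, a₂, ha₁, ha₂, U, hU, hev⟩
    obtain ⟨ε, hε, hball⟩ := Metric.mem_nhds_iff.mp hU
    set c := ε / 2 with hc
    have hcpos : 0 < c := by positivity
    have h11 : Tendsto (fun k => (a₁ k).1) atTop (𝓝 0) :=
      (continuous_fst.tendsto (0:ℝ×ℝ)).comp ha₁
    have h12 : Tendsto (fun k => (a₁ k).2) atTop (𝓝 0) :=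
      (continuous_snd.tendsto (0:ℝ×ℝ)).comp ha₁
    have h22 : Tendsto (fun k => (a₂ k).2) atTop (𝓝 0) :=
      (continuous_snd.tendsto (0:ℝ×ℝ)).comp ha₂
    have e1 : ∀ᶠ k in atTop, |(a₁ k).1| < c / 2 := by
      have := (Metric.tendsto_nhds.mp h11) (c / 2) (by positivity)
      simpa [Real.dist_eq] using this
    have e2 : ∀ᶠ k in atTop, |(a₁ k).2| < c ^ 2 / 8 := by
      have := (Metric.tendsto_nhds.mp h12) (c ^ 2 / 8) (by positivity)
      simpa [Real.dist_eq] using this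
    have e3 : ∀ᶠ k in atTop, |(a₂ k).2| < c ^ 2 / 8 := by
      have := (Metric.tendsto_nhds.mp h22) (c ^ 2 / 8) (by positivity)
      simpa [Real.dist_eq] using this
    have hxlim : Tendsto (fun k => ((c, -(a₂ k).2) : ℝ × ℝ)) atTop (𝓝 (c, 0)) := by
      refine Tendsto.prodMk_nhds tendsto_const_nhds ?_
      simpa using h22.neg
    have hcU : Metric.ball (0 : ℝ × ℝ) ε ∈ 𝓝 ((c, 0) : ℝ × ℝ) := by
      refine Metric.isOpen_ball.mem_nhds ?_
      have hle : dist ((c, 0) : ℝ × ℝ) 0 ≤ |c| := by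
        rw [Prod.dist_eq]; simp [Real.dist_eq]
      refine Metric.mem_ball.mpr (lt_of_le_of_lt hle ?_)
      rw [abs_of_pos hcpos, hc]; linarith
    have e4 : ∀ᶠ k in atTop, ((c, -(a₂ k).2) : ℝ × ℝ) ∈ U :=
      (hxlim.eventually_mem hcU).mono fun k hk => hball hk
    have := (hev.and (e1.and (e2.and (e3.and e4)))).exists
    obtain ⟨k, hempty, hα, hβ, hδ, hxU⟩ := this
    have : ((c, -(a₂ k).2) : ℝ × ℝ) ∈ Ω₁.translate (a₁ k) ∩ Ω₂.translate (a₂ k) ∩ U := by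
      refine ⟨⟨?_, ?_⟩, hxU⟩
      · simp only [Set.translate, Ω₁, Set.mem_setOf_eq, Prod.fst_add, Prod.snd_add]
        have hα1 : (a₁ k).1 > -(c/2) := by cases abs_lt.mp hα; linarith
        nlinarith [abs_lt.mp hβ, abs_lt.mp hδ, abs_lt.mp hα]
      · simp [Set.translate, Ω₂]
    rw [hempty] at this
    exact this
end
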